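/- arXiv:1412.8044 — 2 statements merged into one kernel-verified Lean document; each statement's English description precedes it below -/
import Mathlib

section
/- For any formal power series f, g in t·Q[[t,q]], with P[f](t) = Σ_{k≥0} f(q^k t) and R[f](t) = Σ_{k≥1} f(q^k t), one has the mixed product formula: R[f]·P[g] = R[R[f]·g] + R[f·R[g]] + R[f]·g + R[f·g]. -/
open PowerSeries

noncomputable section

/-- `Q[[q]]`. -/
abbrev Qq : Type := PowerSeries ℚ

/-- `Q[[t,q]]`, viewed as power series in `t` with coefficients in `Q[[q]]`. -/
abbrev QQtq : Type := PowerSeries Qq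

/-- The geometric series `Σ_{k≥0} q^{k n}` (set to `0` at `n = 0`, where the sum diverges;
this value is never used on `t·Q[[t,q]]`). -/
def geomP (n : ℕ) : Qq :=
  if n = 0 then 0 else PowerSeries.mk fun m => if n ∣ m then (1 : ℚ) else 0

/-- The geometric series `Σ_{k≥1} q^{k n}` (set to `0` at `n = 0`). -/
def geomR (n : ℕ) : Qq :=
  if n = 0 then 0 else PowerSeries.mk fun m => if n ∣ m ∧ m ≠ 0 then (1 : ℚ) else 0

/-- `P[f](t) = Σ_{k≥0} f(q^k t)`: on the `t^n`-coefficient this multiplies by `Σ_{k≥0} q^{kn}`. -/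
def Pop (f : QQtq) : QQtq :=
  PowerSeries.mk fun n => geomP n * PowerSeries.coeff (R := Qq) n f

/-- `R[f](t) = Σ_{k≥1} f(q^k t)`: on the `t^n`-coefficient this multiplies by `Σ_{k≥1} q^{kn}`. -/
def Rop (f : QQtq) : QQtq :=
  PowerSeries.mk fun n => geomR n * PowerSeries.coeff (R := Qq) n f

/-- The q-expanding operator `E[f](t) = f(qt)`. -/
def Eop (f : QQtq) : QQtq :=
  PowerSeries.mk fun n => (PowerSeries.X : Qq) ^ n * PowerSeries.coeff (R := Qq) n f

/-- The q-difference operator `D = id - E`, i.e. `D[f](t) = f(t) - f(qt)`. -/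
def Dop (f : QQtq) : QQtq := f - Eop f

/-- `y(t) = t/(1-t) = Σ_{ℓ≥1} t^ℓ`. -/
def yser : QQtq := PowerSeries.mk fun n => if n = 0 then (0 : Qq) else 1

/-!
Both sides are bilinear in `(f, g)` and every operator involved acts diagonally on monomials in `t`,
so it suffices to compare the coefficients of `f_i g_j t^(i+j)` for `i, j ≥ 1`. Writing
`p_n = 1/(1 - q^n)` and `r_n = q^n/(1 - q^n) = p_n - 1`, this comparison is the identity
`r_i p_j = r_(i+j) (r_i + r_j + 1) + r_i`, equivalently `p_i p_j = p_(i+j) (p_i + p_j - 1)`,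
which is the partial-fraction decomposition of `1/((1 - q^i)(1 - q^j))`.
-/

lemma coeff_Pop (n : ℕ) (f : QQtq) : coeff n (Pop f) = geomP n * coeff n f := coeff_mk _ _

lemma coeff_Rop (n : ℕ) (f : QQtq) : coeff n (Rop f) = geomR n * coeff n f := coeff_mk _ _

lemma geomP_mul_one_sub_X_pow {n : ℕ} (hn : n ≠ 0) : geomP n * (1 - X ^ n) = 1 := by
  ext m
  rw [mul_sub, mul_one, map_sub, coeff_mul_X_pow', coeff_one]
  simp only [geomP, if_neg hn, coeff_mk]
  by_cases h : n ≤ m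
  · have hm : m ≠ 0 := by omega
    simp only [if_pos h, if_neg hm, ← Nat.dvd_sub_iff_left h dvd_rfl, sub_self]
  · rcases Nat.eq_zero_or_pos m with rfl | hm
    · simp [hn]
    · simp [h, hm.ne', Nat.not_dvd_of_pos_of_lt hm (not_le.mp h)]

lemma geomP_eq_one_add_geomR {n : ℕ} (hn : n ≠ 0) : geomP n = 1 + geomR n := by
  ext m
  rcases eq_or_ne m 0 with rfl | hm <;> simp [geomP, geomR, coeff_one, *]

-- Multiply `1 - xy = (1 - x) + (1 - y) - (1 - x)(1 - y)` by `uvw`.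
lemma mul_eq_of_mul_one_sub_eq_one {R : Type*} [CommRing R] {x y u v w : R}
    (hu : u * (1 - x) = 1) (hv : v * (1 - y) = 1) (hw : w * (1 - x * y) = 1) :
    u * v = w * (u + v - 1) := by
  linear_combination (-u * v) * hw + (w * v) * hu + (w * u) * hv - w * (v * (1 - y)) * hu - w * hv

lemma geomP_mul_geomP {i j : ℕ} (hi : i ≠ 0) (hj : j ≠ 0) :
    geomP i * geomP j = geomP (i + j) * (geomP i + geomP j - 1) :=
  mul_eq_of_mul_one_sub_eq_one (geomP_mul_one_sub_X_pow hi) (geomP_mul_one_sub_X_pow hj)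
    (by rw [← pow_add]; exact geomP_mul_one_sub_X_pow (by omega))

lemma geomR_mul_geomP {i j : ℕ} (hi : i ≠ 0) (hj : j ≠ 0) :
    geomR i * geomP j = geomR (i + j) * geomR i + geomR (i + j) * geomR j
      + geomR i + geomR (i + j) := by
  have h := geomP_mul_geomP hi hj
  rw [geomP_eq_one_add_geomR hi, geomP_eq_one_add_geomR hj,
    geomP_eq_one_add_geomR (by omega : i + j ≠ 0)] at h
  rw [geomP_eq_one_add_geomR hj]
  linear_combination h

/-- mixed product formula for `R` and `P` on `t·Q[[t,q]]`. -/
theorem Rop_mul_Pop (f g : QQtq)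
    (hf : PowerSeries.coeff (R := Qq) 0 f = 0) (hg : PowerSeries.coeff (R := Qq) 0 g = 0) :
    Rop f * Pop g = Rop (Rop f * g) + Rop (f * Rop g) + Rop f * g + Rop (f * g) := by
  ext n : 1
  simp only [coeff_Rop, coeff_Pop, map_add, coeff_mul, Finset.mul_sum, ← Finset.sum_add_distrib]
  refine Finset.sum_congr rfl fun ⟨i, j⟩ hij => ?_
  obtain rfl : i + j = n := Finset.HasAntidiagonal.mem_antidiagonal.mp hij
  rcases eq_or_ne i 0 with rfl | hi
  · simp [hf]
  rcases eq_or_ne j 0 with rfl | hj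
  · simp [hg]
  linear_combination (coeff i f * coeff j g) * geomR_mul_geomP hi hj
end
end

section
/- Let ℓ ≥ 1 and α_1,…,α_ℓ, β_1,…,β_ℓ be positive integers. For the operator R[f](t) := Σ_{k≥1} f(q^k t) and y(t) = t/(1−t), the iterated expression R^{α_1}[y^{β_1}·R^{α_2}[y^{β_2}·…·R^{α_ℓ}[y^{β_ℓ}]…]](t) equals the multiple sum over j_1 ≥ β_1, …, j_ℓ ≥ β_ℓ and k_1 ≥ α_1, …, k_ℓ ≥ α_ℓ of the product over r = 1,…,ℓ of binom(j_r−1, β_r−1)·binom(k_r−1, α_r−1)·q^{k_r·(j_r + j_{r+1} + … + j_ℓ)}·t^{j_r}. -/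
open PowerSeries

noncomputable section

/-- The iterated operator expression `R^{α_1}[y^{β_1}·R^{α_2}[y^{β_2}·…·R^{α_ℓ}[y^{β_ℓ}]…]]`,
encoded by the list of pairs `[(α_1,β_1),…,(α_ℓ,β_ℓ)]`. -/
def iterRY : List (ℕ × ℕ) → QQtq
  | [] => 1
  | p :: rest => Rop^[p.1] (yser ^ p.2 * iterRY rest)

/-! On the coefficient of `t^n`, `R` is multiplication by `y(q^n)`, and
`y(x)^a = Σ_{k ≥ a} C(k-1, a-1) x^k`; the same expansion applies to `y(t)^β`.
Peeling off the outermost pair `(α₁, β₁)` thus picks `t^{j₁}` from `y^{β₁}` and `q^{n k₁}` from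
`R^{α₁}`, where `n = j₁ + ⋯ + j_ℓ` is the total `t`-degree, leaving the inner expression at
`t^{n - j₁} q^{m - n k₁}`. Splitting `(j₁, k₁)` off the multiple sum gives the same recursion,
so the identity follows by induction on `ℓ`. -/

namespace PowerSeries

variable {R : Type*}

theorem coeff_X_mul_mk_one [Semiring R] (j : ℕ) :
    coeff j (X * mk 1 : R⟦X⟧) = if j = 0 then 0 else 1 := by
  cases j <;> simp [coeff_succ_X_mul]

theorem coeff_X_mul_mk_one_pow [CommRing R] {a : ℕ} (ha : 0 < a) (j : ℕ) :
    coeff j ((X * mk 1 : R⟦X⟧) ^ a) = if a ≤ j then ((j - 1).choose (a - 1) : R) else 0 := by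
  obtain ⟨d, rfl⟩ := Nat.exists_eq_add_of_lt ha
  rw [mul_pow, mk_one_pow_eq_mk_choose_add, coeff_X_pow_mul', coeff_mk]
  split_ifs with h
  · congr 2; omega
  · rfl

theorem coeff_expand_mul_eq_sum [CommRing R] {n : ℕ} (hn : n ≠ 0) (f g : R⟦X⟧) (m : ℕ) :
    coeff m (expand n hn f * g)
      = ∑ k ∈ Finset.range (m + 1),
          if n * k ≤ m then coeff k f * coeff (m - n * k) g else 0 := by
  rw [coeff_mul, ← Finset.sum_filter]
  symm
  refine Finset.sum_of_injOn (fun k => (n * k, m - n * k)) ?_ ?_ ?_ ?_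
  · intro k _ k' _ h
    simpa [hn] using congrArg Prod.fst h
  · intro k hk
    simp only [Finset.coe_filter, Finset.mem_range, Set.mem_ofPred_eq] at hk
    simp [hk.2]
  · rintro ⟨i, l⟩ hil hnot
    rw [Finset.HasAntidiagonal.mem_antidiagonal] at hil
    rw [coeff_expand_of_not_dvd, zero_mul]
    rintro ⟨k, rfl⟩
    refine hnot ⟨k, ?_, by simp [← hil]⟩
    simp only [Finset.coe_filter, Finset.mem_range, Set.mem_ofPred_eq]
    constructor
    · nlinarith [Nat.pos_of_ne_zero hn]
    · omega
  · intro k _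
    simp

end PowerSeries

theorem yser_eq_X_mul_mk_one : yser = X * mk 1 := by
  ext j
  rw [yser, coeff_mk, coeff_X_mul_mk_one]

theorem geomR_eq_expand {n : ℕ} (hn : n ≠ 0) : geomR n = expand n hn (X * mk 1) := by
  ext m
  rw [geomR, if_neg hn, coeff_mk, coeff_expand, coeff_X_mul_mk_one]
  by_cases hdvd : n ∣ m
  · have hlt : m < n ↔ m = 0 :=
      ⟨Nat.eq_zero_of_dvd_of_lt hdvd, fun h => h ▸ Nat.pos_of_ne_zero hn⟩
    simp [hdvd, Nat.div_eq_zero_iff, hn, hlt]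
  · simp [hdvd]

theorem coeff_iterate_Rop (a : ℕ) (f : QQtq) (n : ℕ) :
    coeff n (Rop^[a] f) = geomR n ^ a * coeff n f := by
  induction a with
  | zero => simp
  | succ a ih => rw [Function.iterate_succ_apply', Rop, coeff_mk, ih, pow_succ', mul_assoc]

theorem coeff_coeff_iterRY_cons {a b : ℕ} (ha : 0 < a) (hb : 0 < b) (L : List (ℕ × ℕ))
    (n m : ℕ) :
    coeff m (coeff n (iterRY ((a, b) :: L)))
      = ∑' jk : ℕ × ℕ, if b ≤ jk.1 ∧ a ≤ jk.2 ∧ jk.1 ≤ n ∧ n * jk.2 ≤ m then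
          ((jk.1 - 1).choose (b - 1) * (jk.2 - 1).choose (a - 1) : ℚ)
            * coeff (m - n * jk.2) (coeff (n - jk.1) (iterRY L))
        else 0 := by
  rcases Nat.eq_zero_or_pos n with rfl | hn
  · have hz : geomR 0 = 0 := if_pos rfl
    rw [iterRY, coeff_iterate_Rop, hz, zero_pow ha.ne', zero_mul, map_zero, eq_comm]
    exact (tsum_congr fun jk => if_neg (by omega)).trans tsum_zero
  rw [tsum_eq_sum (s := Finset.range (n + 1) ×ˢ Finset.range (m + 1)), Finset.sum_product,
    Finset.sum_comm, iterRY, coeff_iterate_Rop, geomR_eq_expand hn.ne', ← map_pow,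
    coeff_expand_mul_eq_sum, coeff_mul, Finset.Nat.sum_antidiagonal_eq_sum_range_succ_mk]
  · refine Finset.sum_congr rfl fun k _ => ?_
    split_ifs with hk
    · rw [map_sum, Finset.mul_sum]
      refine Finset.sum_congr rfl fun j hj => ?_
      rw [Finset.mem_range] at hj
      rw [yser_eq_X_mul_mk_one, coeff_X_mul_mk_one_pow ha, coeff_X_mul_mk_one_pow hb,
        ← map_natCast (C (R := ℚ)), ← map_zero (C (R := ℚ)), ← apply_ite C, coeff_C_mul]
      dsimp only
      split_ifs <;> first | omega | ring
    · exact (Finset.sum_eq_zero fun j _ => if_neg fun h => hk h.2.2.2).symm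
  · rintro ⟨j, k⟩ hjk
    simp only [Finset.mem_product, Finset.mem_range, not_and_or, not_lt] at hjk
    have := Nat.le_mul_of_pos_left k hn
    exact if_neg fun h => by dsimp only at h; omega

theorem tsum_fin_cons_prod {M : Type*} [AddCommMonoid M] [TopologicalSpace M] [ContinuousAdd M]
    [T3Space M] {α β : Type*} {ℓ : ℕ} (f : (Fin (ℓ + 1) → α) × (Fin (ℓ + 1) → β) → M)
    (hf : f.support.Finite) :
    ∑' p, f p = ∑' q : α × β, ∑' p : (Fin ℓ → α) × (Fin ℓ → β),
      f (Fin.cons q.1 p.1, Fin.cons q.2 p.2) := by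
  let e : (α × β) × ((Fin ℓ → α) × (Fin ℓ → β)) ≃ (Fin (ℓ + 1) → α) × (Fin (ℓ + 1) → β) :=
    (Equiv.prodProdProdComm _ _ _ _).trans
      ((Fin.consEquiv fun _ => α).prodCongr (Fin.consEquiv fun _ => β))
  have hfe : (f ∘ e).support.Finite := hf.preimage e.injective.injOn
  rw [← e.tsum_eq]
  exact Summable.tsum_prod' (summable_of_hasFiniteSupport hfe)
    fun q => summable_of_hasFiniteSupport (hfe.preimage (Prod.mk_right_injective q).injOn)

theorem Fin.sum_Ici_succ_cons {M : Type*} [AddCommMonoid M] {ℓ : ℕ} (x : M) (J : Fin ℓ → M)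
    (r : Fin ℓ) : ∑ s ∈ Finset.Ici r.succ, (Fin.cons x J : Fin (ℓ + 1) → M) s
      = ∑ s ∈ Finset.Ici r, J s := by
  rw [← Fin.map_succEmb_Ici, Finset.sum_map]
  simp

theorem Fin.sum_mul_sum_Ici_cons {M : Type*} [NonUnitalNonAssocSemiring M] {ℓ : ℕ} (j k : M)
    (J K : Fin ℓ → M) :
    ∑ r, (Fin.cons k K : Fin (ℓ + 1) → M) r
        * ∑ s ∈ Finset.Ici r, (Fin.cons j J : Fin (ℓ + 1) → M) s
      = k * (j + ∑ s, J s) + ∑ r, K r * ∑ s ∈ Finset.Ici r, J s := by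
  rw [Fin.sum_univ_succ, ← bot_eq_zero, Finset.Ici_bot, Fin.sum_cons, bot_eq_zero]
  simp only [Fin.cons_zero, Fin.cons_succ, Fin.sum_Ici_succ_cons]

def iterRYSummand {ℓ : ℕ} (α β : Fin ℓ → ℕ) (n m : ℕ) (jk : (Fin ℓ → ℕ) × (Fin ℓ → ℕ)) : ℚ :=
  if (∀ r, β r ≤ jk.1 r) ∧ (∀ r, α r ≤ jk.2 r)
      ∧ (∑ r, jk.1 r) = n
      ∧ (∑ r, jk.2 r * ∑ s ∈ Finset.Ici r, jk.1 s) = m then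
    (∏ r, ((jk.1 r - 1).choose (β r - 1) * (jk.2 r - 1).choose (α r - 1)) : ℚ)
  else 0

theorem iterRYSummand_cons {ℓ : ℕ} (a b : ℕ) (α β : Fin ℓ → ℕ) (n m j k : ℕ)
    (J K : Fin ℓ → ℕ) :
    iterRYSummand (Fin.cons a α) (Fin.cons b β) n m (Fin.cons j J, Fin.cons k K)
      = if b ≤ j ∧ a ≤ k ∧ j ≤ n ∧ n * k ≤ m then
          ((j - 1).choose (b - 1) * (k - 1).choose (a - 1) : ℚ)
            * iterRYSummand α β (n - j) (m - n * k) (J, K)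
        else 0 := by
  simp only [iterRYSummand, Fin.forall_fin_succ, Fin.cons_zero, Fin.cons_succ, Fin.sum_cons,
    Fin.sum_mul_sum_Ici_cons, Fin.prod_univ_succ]
  set s := ∑ r, J r
  set w := ∑ r, K r * ∑ s ∈ Finset.Ici r, J s
  have key : ((b ≤ j ∧ ∀ r, β r ≤ J r) ∧ (a ≤ k ∧ ∀ r, α r ≤ K r) ∧ j + s = n
        ∧ k * (j + s) + w = m)
      ↔ (b ≤ j ∧ a ≤ k ∧ j ≤ n ∧ n * k ≤ m)
        ∧ (∀ r, β r ≤ J r) ∧ (∀ r, α r ≤ K r) ∧ s = n - j ∧ w = m - n * k := by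
    grind
  rw [if_congr key rfl rfl, ite_and]
  split_ifs <;> ring

theorem iterRYSummand_support_finite {ℓ : ℕ} (α : Fin ℓ → ℕ) {β : Fin ℓ → ℕ}
    (hβ : ∀ r, 0 < β r) (n m : ℕ) : (iterRYSummand α β n m).support.Finite := by
  refine ((Set.Finite.pi fun _ => Set.finite_Iic n).prod
    (Set.Finite.pi fun _ => Set.finite_Iic m)).subset ?_
  rintro ⟨J, K⟩ hJK
  rw [Function.mem_support, iterRYSummand, ite_ne_right_iff] at hJK
  obtain ⟨⟨hJ, -, rfl, rfl⟩, -⟩ := hJK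
  refine ⟨fun r _ => Finset.single_le_sum (fun _ _ => Nat.zero_le _) (Finset.mem_univ r),
    fun r _ => ?_⟩
  have hpos : 0 < ∑ s ∈ Finset.Ici r, J s :=
    (hβ r).trans_le ((hJ r).trans (Finset.single_le_sum (fun _ _ => Nat.zero_le _)
      (Finset.mem_Ici.2 le_rfl)))
  calc K r ≤ K r * ∑ s ∈ Finset.Ici r, J s := Nat.le_mul_of_pos_right _ hpos
    _ ≤ ∑ r', K r' * ∑ s ∈ Finset.Ici r', J s :=
      Finset.single_le_sum (f := fun r' => K r' * ∑ s ∈ Finset.Ici r', J s)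
        (fun _ _ => Nat.zero_le _) (Finset.mem_univ r)

theorem iterRY_coeff_general (ℓ : ℕ) (α β : Fin ℓ → ℕ)
    (hα : ∀ r, 0 < α r) (hβ : ∀ r, 0 < β r) (n m : ℕ) :
    PowerSeries.coeff (R := ℚ) m
        (PowerSeries.coeff (R := Qq) n (iterRY (List.ofFn fun r => (α r, β r))))
      = ∑' jk : (Fin ℓ → ℕ) × (Fin ℓ → ℕ),
          if (∀ r, β r ≤ jk.1 r) ∧ (∀ r, α r ≤ jk.2 r)
              ∧ (∑ r, jk.1 r) = n
              ∧ (∑ r, jk.2 r * ∑ s ∈ Finset.Ici r, jk.1 s) = m then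
            (∏ r, ((jk.1 r - 1).choose (β r - 1) * (jk.2 r - 1).choose (α r - 1)) : ℚ)
          else 0 := by
  change _ = ∑' jk, iterRYSummand α β n m jk
  induction ℓ generalizing n m with
  | zero =>
    by_cases hn : n = 0 <;> simp [iterRYSummand, iterRY, coeff_one, hn, eq_comm]
  | succ ℓ ih =>
    obtain ⟨a, α, rfl⟩ : ∃ a α', α = Fin.cons a α' := ⟨_, _, (Fin.cons_self_tail α).symm⟩
    obtain ⟨b, β, rfl⟩ : ∃ b β', β = Fin.cons b β' := ⟨_, _, (Fin.cons_self_tail β).symm⟩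
    simp only [Fin.forall_fin_succ, Fin.cons_zero, Fin.cons_succ] at hα hβ
    rw [List.ofFn_succ]
    simp only [Fin.cons_zero, Fin.cons_succ]
    rw [coeff_coeff_iterRY_cons hα.1 hβ.1,
      tsum_fin_cons_prod _ (iterRYSummand_support_finite _ (Fin.forall_fin_succ.2 hβ) n m)]
    refine tsum_congr fun jk => ?_
    simp only [iterRYSummand_cons]
    split_ifs
    · rw [tsum_mul_left, ih α β hα.2 hβ.2]
    · exact tsum_zero.symm

/-- the coefficient of `t^n q^m` in the iterated expression equals the
corresponding multiple sum of products of binomial coefficients. -/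
theorem iterRY_coeff (ℓ : ℕ) (hℓ : 0 < ℓ) (α β : Fin ℓ → ℕ)
    (hα : ∀ r, 0 < α r) (hβ : ∀ r, 0 < β r) (n m : ℕ) :
    PowerSeries.coeff (R := ℚ) m
        (PowerSeries.coeff (R := Qq) n (iterRY (List.ofFn fun r => (α r, β r))))
      = ∑' jk : (Fin ℓ → ℕ) × (Fin ℓ → ℕ),
          if (∀ r, β r ≤ jk.1 r) ∧ (∀ r, α r ≤ jk.2 r)
              ∧ (∑ r, jk.1 r) = n
              ∧ (∑ r, jk.2 r * ∑ s ∈ Finset.Ici r, jk.1 s) = m then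
            (∏ r, ((jk.1 r - 1).choose (β r - 1) * (jk.2 r - 1).choose (α r - 1)) : ℚ)
          else 0 :=
  iterRY_coeff_general ℓ α β hα hβ n m
end
end
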